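/- Let d and p be nonnegative integers with p < 2d and let G and H be finite connected simple graphs, where H has more than ⌈(2d−p)/2⌉ vertices. If γ_d^p(G) = ∞ and H contains a pendant path of order at least (2d−p)/2, then γ_d^p(G ⊠ H) = ∞. -/

import Mathlib

open SimpleGraph

/-- The strong product `G ⊠ H` of two simple graphs. -/
def strongProd {α β : Type*} (G : SimpleGraph α) (H : SimpleGraph β) :
    SimpleGraph (α × β) where
  Adj x y := (G.Adj x.1 y.1 ∧ x.2 = y.2) ∨ (x.1 = y.1 ∧ H.Adj x.2 y.2) ∨
    (G.Adj x.1 y.1 ∧ H.Adj x.2 y.2)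
  symm := by
    refine ⟨?_⟩
    rintro ⟨a, b⟩ ⟨c, e⟩ (⟨h1, h2⟩ | ⟨h1, h2⟩ | ⟨h1, h2⟩)
    · exact Or.inl ⟨h1.symm, h2.symm⟩
    · exact Or.inr (Or.inl ⟨h1.symm, h2.symm⟩)
    · exact Or.inr (Or.inr ⟨h1.symm, h2.symm⟩)
  loopless := by
    refine ⟨?_⟩
    rintro ⟨a, b⟩ (⟨h1, _⟩ | ⟨_, h2⟩ | ⟨h1, _⟩)
    · exact G.ne_of_adj h1 rfl
    · exact H.ne_of_adj h2 rfl
    · exact G.ne_of_adj h1 rfl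

/-- `S` is a `d`-distance dominating set of `G`: every vertex is within distance `d`
of some vertex of `S`. -/
def IsDistDomSet {V : Type*} (G : SimpleGraph V) (d : ℕ) (S : Finset V) : Prop :=
  ∀ v : V, ∃ u ∈ S, G.dist u v ≤ d

/-- `S` is a `p`-packing of `G`: distinct vertices of `S` are at distance at least `p + 1`. -/
def IsPacking {V : Type*} (G : SimpleGraph V) (p : ℕ) (S : Finset V) : Prop :=
  ∀ x ∈ S, ∀ y ∈ S, x ≠ y → p + 1 ≤ G.dist x y

/-- The `d`-distance `p`-packing domination number `γ_d^p(G)`, an element of `ℕ∞`,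
equal to `⊤` if no `d`-distance dominating `p`-packing exists. -/
noncomputable def distPackDomNum {V : Type*} (G : SimpleGraph V) (d p : ℕ) : ℕ∞ :=
  sInf {n : ℕ∞ | ∃ S : Finset V, n = S.card ∧ IsDistDomSet G d S ∧ IsPacking G p S}

/-- The radius of a graph: the least `k` such that some vertex is within
distance `k` of all vertices. -/
noncomputable def graphRadius {V : Type*} (G : SimpleGraph V) : ℕ :=
  sInf {k : ℕ | ∃ u : V, ∀ v : V, G.dist u v ≤ k}
/-- `H` contains a pendant path of order `k`: vertices `v 0, …, v (k-1)` forming a path,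
with `v 0` of degree `1` and the other `v i` of degree `2` in `H`. -/
def HasPendantPath {W : Type*} (H : SimpleGraph W) (k : ℕ) : Prop :=
  ∃ v : ℕ → W, Set.InjOn v (Set.Iio k) ∧
    (∀ i : ℕ, i + 1 < k → H.Adj (v i) (v (i + 1))) ∧
    (H.neighborSet (v 0)).ncard = 1 ∧
    (∀ i : ℕ, 1 ≤ i → i < k → (H.neighborSet (v i)).ncard = 2)

section Aux

variable {α β : Type*} {G : SimpleGraph α} {H : SimpleGraph β}

lemma strongProd_adj {x y : α × β} :
    (strongProd G H).Adj x y ↔ (G.Adj x.1 y.1 ∧ x.2 = y.2) ∨ (x.1 = y.1 ∧ H.Adj x.2 y.2) ∨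
      (G.Adj x.1 y.1 ∧ H.Adj x.2 y.2) := Iff.rfl

lemma strongProd_walk_horiz {g : α} {h h' : β} (W2 : H.Walk h h') :
    ∃ W : (strongProd G H).Walk (g, h) (g, h'), W.length ≤ W2.length := by
  induction W2 with
  | nil => exact ⟨Walk.nil, le_rfl⟩
  | @cons x y z a W ih =>
    obtain ⟨W', hW'⟩ := ih
    exact ⟨Walk.cons (show (strongProd G H).Adj (g, x) (g, y) from
      Or.inr (Or.inl ⟨rfl, a⟩)) W', by simp only [Walk.length_cons]; omega⟩

lemma strongProd_walk_of_walks {g g' : α} {h h' : β}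
    (W1 : G.Walk g g') (W2 : H.Walk h h') :
    ∃ W : (strongProd G H).Walk (g, h) (g', h'), W.length ≤ max W1.length W2.length := by
  induction W1 generalizing h h' W2 with
  | nil =>
    exact (strongProd_walk_horiz W2).imp (fun W hW => le_trans hW (le_max_right _ _))
  | cons a W1 ih =>
    cases W2 with
    | nil =>
      obtain ⟨W', hW'⟩ := ih (Walk.nil (u := h))
      refine ⟨Walk.cons ?_ W', ?_⟩
      · exact Or.inl ⟨a, rfl⟩
      · change W'.length + 1 ≤ _
        simp only [Walk.length_cons, Walk.length_nil] at *
        omega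
    | @cons _ h2 _ a2 W2 =>
      obtain ⟨W', hW'⟩ := ih W2
      refine ⟨Walk.cons ?_ W', ?_⟩
      · exact Or.inr (Or.inr ⟨a, a2⟩)
      · change W'.length + 1 ≤ _
        simp only [Walk.length_cons] at *
        omega

lemma strongProd_walk_fst {x y : α × β} (W : (strongProd G H).Walk x y) :
    ∃ W' : G.Walk x.1 y.1, W'.length ≤ W.length := by
  induction W with
  | nil => exact ⟨Walk.nil, le_rfl⟩
  | @cons x z y a W ih =>
    obtain ⟨W', hW'⟩ := ih
    rcases a with ⟨h1, _⟩ | ⟨h1, _⟩ | ⟨h1, _⟩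
    · exact ⟨Walk.cons h1 W', by show _ ≤ W.length + 1; simp only [Walk.length_cons]; omega⟩
    · exact ⟨W'.copy h1.symm rfl, by show _ ≤ W.length + 1; simp only [Walk.length_cons, Walk.length_copy]; omega⟩
    · exact ⟨Walk.cons h1 W', by show _ ≤ W.length + 1; simp only [Walk.length_cons]; omega⟩

lemma strongProd_walk_snd {x y : α × β} (W : (strongProd G H).Walk x y) :
    ∃ W' : H.Walk x.2 y.2, W'.length ≤ W.length := by
  induction W with
  | nil => exact ⟨Walk.nil, le_rfl⟩
  | @cons x z y a W ih =>
    obtain ⟨W', hW'⟩ := ih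
    rcases a with ⟨_, h1⟩ | ⟨_, h1⟩ | ⟨_, h1⟩
    · exact ⟨W'.copy h1.symm rfl, by show _ ≤ W.length + 1; simp only [Walk.length_cons, Walk.length_copy]; omega⟩
    · exact ⟨Walk.cons h1 W', by show _ ≤ W.length + 1; simp only [Walk.length_cons]; omega⟩
    · exact ⟨Walk.cons h1 W', by show _ ≤ W.length + 1; simp only [Walk.length_cons]; omega⟩

lemma strongProd_connected (hG : G.Connected) (hH : H.Connected) :
    (strongProd G H).Connected := by
  rw [connected_iff]
  constructor
  · rintro ⟨g, h⟩ ⟨g', h'⟩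
    obtain ⟨W1⟩ := hG.preconnected g g'
    obtain ⟨W2⟩ := hH.preconnected h h'
    obtain ⟨W, _⟩ := strongProd_walk_of_walks (G := G) (H := H) W1 W2
    exact ⟨W⟩
  · obtain ⟨g⟩ := hG.nonempty
    obtain ⟨h⟩ := hH.nonempty
    exact ⟨(g, h)⟩

lemma strongProd_dist_le (hG : G.Connected) (hH : H.Connected) (x y : α × β) :
    (strongProd G H).dist x y ≤ max (G.dist x.1 y.1) (H.dist x.2 y.2) := by
  obtain ⟨W1, h1⟩ := hG.exists_walk_length_eq_dist x.1 y.1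
  obtain ⟨W2, h2⟩ := hH.exists_walk_length_eq_dist x.2 y.2
  obtain ⟨W, hW⟩ := strongProd_walk_of_walks W1 W2
  refine le_trans (SimpleGraph.dist_le W) ?_
  rw [h1, h2] at hW
  exact hW

lemma strongProd_dist_fst (hG : G.Connected) (hH : H.Connected) (x y : α × β) :
    G.dist x.1 y.1 ≤ (strongProd G H).dist x y := by
  obtain ⟨W, hW⟩ := (strongProd_connected hG hH).exists_walk_length_eq_dist x y
  obtain ⟨W', h'⟩ := strongProd_walk_fst W
  exact le_trans (SimpleGraph.dist_le W') (hW ▸ h')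

lemma strongProd_dist_snd (hG : G.Connected) (hH : H.Connected) (x y : α × β) :
    H.dist x.2 y.2 ≤ (strongProd G H).dist x y := by
  obtain ⟨W, hW⟩ := (strongProd_connected hG hH).exists_walk_length_eq_dist x y
  obtain ⟨W', h'⟩ := strongProd_walk_snd W
  exact le_trans (SimpleGraph.dist_le W') (hW ▸ h')

lemma distPackDomNum_ne_top_witness {V : Type*} {G : SimpleGraph V} {d p : ℕ}
    (h : distPackDomNum G d p = ⊤) (S : Finset V)
    (hdom : IsDistDomSet G d S) (hpack : IsPacking G p S) : False := by
  have hmem : (S.card : ℕ∞) ∈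
      {n : ℕ∞ | ∃ S : Finset V, n = S.card ∧ IsDistDomSet G d S ∧ IsPacking G p S} :=
    ⟨S, rfl, hdom, hpack⟩
  have hle := sInf_le hmem
  rw [distPackDomNum] at h
  rw [h, top_le_iff] at hle
  exact (ENat.coe_ne_top S.card) hle

lemma d_lt_p_of_top {V : Type*} [Fintype V] {G : SimpleGraph V} {d p : ℕ}
    (hG : G.Connected) (h : distPackDomNum G d p = ⊤) : d < p := by
  classical
  by_contra hle
  push_neg at hle
  obtain ⟨S, hS, hmax⟩ := Finset.exists_max_image
    (Finset.univ.powerset.filter (fun S : Finset V => IsPacking G p S)) Finset.card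
    ⟨∅, by simp [IsPacking]⟩
  have hSpack : IsPacking G p S := (Finset.mem_filter.1 hS).2
  have hdom : IsDistDomSet G d S := by
    intro x
    by_contra hx
    push_neg at hx
    have hxS : x ∉ S := by
      intro hxS
      have := hx x hxS
      rw [SimpleGraph.dist_self] at this
      omega
    have hins : insert x S ∈
        Finset.univ.powerset.filter (fun S : Finset V => IsPacking G p S) := by
      refine Finset.mem_filter.2 ⟨Finset.mem_powerset.2 (Finset.subset_univ _), ?_⟩
      intro y hy z hz hyz
      rcases Finset.mem_insert.1 hy with h1 | h1
      · rcases Finset.mem_insert.1 hz with h2 | h2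
        · exact absurd (h1.trans h2.symm) hyz
        · have := hx z h2
          rw [h1, SimpleGraph.dist_comm]
          omega
      · rcases Finset.mem_insert.1 hz with h2 | h2
        · have := hx y h1
          rw [h2]
          omega
        · exact hSpack y h1 z h2 hyz
    have := hmax _ hins
    rw [Finset.card_insert_of_notMem hxS] at this
    omega
  exact distPackDomNum_ne_top_witness h S hdom hSpack

end Aux

open Classical in
/-- Auxiliary potential function for a pendant path. -/
noncomputable def pendPhi {β : Type*} (H : SimpleGraph β) (v : ℕ → β) (k : ℕ) (w : β)
    (x : β) : ℕ :=
  if hx : ∃ i, i < k ∧ v i = x then hx.choose else k + H.dist w x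

lemma pendant_ball {β : Type*} [Fintype β] {H : SimpleGraph β} (hH : H.Connected)
    {k : ℕ} (hk : 1 ≤ k) {v : ℕ → β} (hinj : Set.InjOn v (Set.Iio k))
    (hadj : ∀ i : ℕ, i + 1 < k → H.Adj (v i) (v (i + 1)))
    (h0 : (H.neighborSet (v 0)).ncard = 1)
    (hmid : ∀ i : ℕ, 1 ≤ i → i < k → (H.neighborSet (v i)).ncard = 2)
    {d : ℕ} {b b' : β} (hb : H.dist (v 0) b ≤ d) (hb' : H.dist (v 0) b' ≤ d) :
    H.dist b b' ≤ max d (2 * d - 2 * k) := by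
  classical
  have hne : ∀ i j, i < k → j < k → v i = v j → i = j := fun i j hi hj h =>
    hinj (Set.mem_Iio.2 hi) (Set.mem_Iio.2 hj) h
  -- neighbor characterizations
  have hN0 : 1 < k → H.neighborSet (v 0) = {v 1} := by
    intro h2
    obtain ⟨a, ha⟩ := Set.ncard_eq_one.1 h0
    have h1 : v 1 ∈ H.neighborSet (v 0) := (H.mem_neighborSet _ _).2 (hadj 0 (by omega))
    rw [ha] at h1
    rw [ha, Set.mem_singleton_iff.1 h1]
  have hNmid : ∀ i, 1 ≤ i → i + 1 < k →
      H.neighborSet (v i) = {v (i - 1), v (i + 1)} := by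
    intro i h1 h2
    have e : i - 1 + 1 = i := by omega
    have hm1 : v (i - 1) ∈ H.neighborSet (v i) := by
      refine (H.mem_neighborSet _ _).2 ?_
      have := hadj (i - 1) (by omega)
      rw [e] at this
      exact this.symm
    have hp1 : v (i + 1) ∈ H.neighborSet (v i) := (H.mem_neighborSet _ _).2 (hadj i h2)
    have hsub : ({v (i - 1), v (i + 1)} : Set β) ⊆ H.neighborSet (v i) :=
      Set.insert_subset hm1 (Set.singleton_subset_iff.2 hp1)
    have hnepair : v (i - 1) ≠ v (i + 1) := by
      intro h
      have := hne _ _ (by omega) (by omega) h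
      omega
    refine (Set.eq_of_subset_of_ncard_le hsub ?_ (Set.toFinite _)).symm
    rw [hmid i h1 (by omega), Set.ncard_pair hnepair]
  -- the vertex w just outside the pendant path
  have hlastmem : 2 ≤ k → v (k - 2) ∈ H.neighborSet (v (k - 1)) := by
    intro hk2
    refine (H.mem_neighborSet _ _).2 ?_
    have := hadj (k - 2) (by omega)
    rw [show k - 2 + 1 = k - 1 by omega] at this
    exact this.symm
  have key : ∀ w, H.Adj (v (k - 1)) w → w ≠ v (k - 2) → ∀ j, j < k → w ≠ v j := by
    intro w hw hwne j hj hwj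
    subst hwj
    by_cases hj1 : j = k - 1
    · exact H.loopless.irrefl _ (hj1 ▸ hw)
    by_cases hj2 : j = k - 2
    · exact hwne (by rw [hj2])
    by_cases hj0 : j = 0
    · subst hj0
      have h1k : 1 < k := by omega
      have hmem : v (k - 1) ∈ H.neighborSet (v 0) := (H.mem_neighborSet _ _).2 hw.symm
      rw [hN0 h1k] at hmem
      have := hne _ _ (by omega) (by omega) (Set.mem_singleton_iff.1 hmem)
      omega
    · have h1j : 1 ≤ j := by omega
      have hj1k : j + 1 < k := by omega
      have hmem : v (k - 1) ∈ H.neighborSet (v j) := (H.mem_neighborSet _ _).2 hw.symm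
      rw [hNmid j h1j hj1k, Set.mem_insert_iff, Set.mem_singleton_iff] at hmem
      rcases hmem with h | h
      · have := hne _ _ (by omega) (by omega) h
        omega
      · have := hne _ _ (by omega) (by omega) h
        omega
  obtain ⟨w, hw_adj, hw_off⟩ :
      ∃ w, H.Adj (v (k - 1)) w ∧ ∀ j, j < k → w ≠ v j := by
    rcases eq_or_lt_of_le hk with hk1 | hk2
    · obtain ⟨a, ha⟩ := Set.ncard_eq_one.1 h0
      have haN : a ∈ H.neighborSet (v 0) := by rw [ha]; exact Set.mem_singleton a
      have hadj0 : H.Adj (v 0) a := (H.mem_neighborSet _ _).1 haN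
      refine ⟨a, by rw [show k - 1 = 0 by omega]; exact hadj0, ?_⟩
      intro j hj hja
      have : j = 0 := by omega
      subst this
      exact H.loopless.irrefl _ (hja ▸ hadj0)
    · have hk2' : 2 ≤ k := hk2
      have hmem := hlastmem hk2'
      obtain ⟨a, b2, hab, hNl⟩ := Set.ncard_eq_two.1 (hmid (k - 1) (by omega) (by omega))
      have hmem' := hmem
      rw [hNl, Set.mem_insert_iff, Set.mem_singleton_iff] at hmem'
      rcases hmem' with h | h
      · -- v (k-2) = a, take w = b2
        have hb2N : b2 ∈ H.neighborSet (v (k - 1)) := by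
          rw [hNl]; exact Set.mem_insert_iff.2 (Or.inr rfl)
        have hb2adj : H.Adj (v (k - 1)) b2 := (H.mem_neighborSet _ _).1 hb2N
        have hb2ne : b2 ≠ v (k - 2) := by
          intro he
          exact hab (by rw [← h, ← he])
        exact ⟨b2, hb2adj, key b2 hb2adj hb2ne⟩
      · -- v (k-2) = b2, take w = a
        have haN : a ∈ H.neighborSet (v (k - 1)) := by
          rw [hNl]; exact Set.mem_insert a _
        have haadj : H.Adj (v (k - 1)) a := (H.mem_neighborSet _ _).1 haN
        have hane : a ≠ v (k - 2) := by
          intro he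
          exact hab (by rw [he, ← h])
        exact ⟨a, haadj, key a haadj hane⟩
  -- characterization of neighbors of v (k-1)
  have hlast_char : ∀ y, H.Adj (v (k - 1)) y → y = w ∨ (2 ≤ k ∧ y = v (k - 2)) := by
    intro y hy
    rcases eq_or_lt_of_le hk with hk1 | hk2
    · left
      obtain ⟨a, ha⟩ := Set.ncard_eq_one.1 h0
      have hyN : y ∈ H.neighborSet (v 0) := by
        rw [show (0:ℕ) = k - 1 by omega]
        exact (H.mem_neighborSet _ _).2 hy
      have hwN : w ∈ H.neighborSet (v 0) := by
        rw [show (0:ℕ) = k - 1 by omega]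
        exact (H.mem_neighborSet _ _).2 hw_adj
      rw [ha] at hyN hwN
      rw [Set.mem_singleton_iff.1 hyN, Set.mem_singleton_iff.1 hwN]
    · have hk2' : 2 ≤ k := hk2
      have hNl : H.neighborSet (v (k - 1)) = {v (k - 2), w} := by
        have hsub : ({v (k - 2), w} : Set β) ⊆ H.neighborSet (v (k - 1)) :=
          Set.insert_subset (hlastmem hk2')
            (Set.singleton_subset_iff.2 ((H.mem_neighborSet _ _).2 hw_adj))
        have hnepair : v (k - 2) ≠ w := fun h => hw_off (k - 2) (by omega) h.symm
        refine (Set.eq_of_subset_of_ncard_le hsub ?_ (Set.toFinite _)).symm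
        rw [hmid (k - 1) (by omega) (by omega), Set.ncard_pair hnepair]
      have hyN : y ∈ H.neighborSet (v (k - 1)) := (H.mem_neighborSet _ _).2 hy
      rw [hNl, Set.mem_insert_iff, Set.mem_singleton_iff] at hyN
      rcases hyN with h | h
      · exact Or.inr ⟨hk2', h⟩
      · exact Or.inl h
  -- basic facts about pendPhi
  set φ : β → ℕ := pendPhi H v k w with hφdef
  have hφv : ∀ i, i < k → φ (v i) = i := by
    intro i hi
    have hx : ∃ j, j < k ∧ v j = v i := ⟨i, hi, rfl⟩
    rw [hφdef]
    unfold pendPhi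
    rw [dif_pos hx]
    exact hne _ _ hx.choose_spec.1 hi hx.choose_spec.2
  have hφoff : ∀ x, (∀ i, i < k → v i ≠ x) → φ x = k + H.dist w x := by
    intro x hx
    rw [hφdef]
    unfold pendPhi
    rw [dif_neg]
    rintro ⟨i, hi, he⟩
    exact hx i hi he
  have hφw : φ w = k := by
    rw [hφoff w (fun i hi he => hw_off i hi he.symm), SimpleGraph.dist_self]
    omega
  -- the step inequality
  have hstep : ∀ x y, H.Adj x y → φ y ≤ φ x + 1 := by
    intro x y hxy
    by_cases hx : ∃ i, i < k ∧ v i = x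
    · obtain ⟨i, hi, rfl⟩ := hx
      rw [hφv i hi]
      by_cases hik : i = k - 1
      · subst hik
        rcases hlast_char y hxy with rfl | ⟨hk2, rfl⟩
        · rw [hφw]; omega
        · rw [hφv (k - 2) (by omega)]; omega
      · by_cases hi0 : i = 0
        · subst hi0
          have h1k : 1 < k := by omega
          have : y ∈ H.neighborSet (v 0) := (H.mem_neighborSet _ _).2 hxy
          rw [hN0 h1k] at this
          rw [Set.mem_singleton_iff.1 this, hφv 1 (by omega)]
        · have h1i : 1 ≤ i := by omega
          have hi1k : i + 1 < k := by omega
          have : y ∈ H.neighborSet (v i) := (H.mem_neighborSet _ _).2 hxy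
          rw [hNmid i h1i hi1k, Set.mem_insert_iff, Set.mem_singleton_iff] at this
          rcases this with h | h
          · rw [h, hφv (i - 1) (by omega)]; omega
          · rw [h, hφv (i + 1) (by omega)]
    · push_neg at hx
      have hx' : ∀ i, i < k → v i ≠ x := fun i hi he => hx i hi he
      rw [hφoff x hx']
      by_cases hy : ∃ i, i < k ∧ v i = y
      · obtain ⟨i, hi, rfl⟩ := hy
        rw [hφv i hi]
        -- x is a neighbor of v i off the path, so i = k - 1 and x = w
        by_cases hik : i = k - 1
        · omega
        · by_cases hi0 : i = 0
          · subst hi0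
            have h1k : 1 < k := by omega
            have : x ∈ H.neighborSet (v 0) := (H.mem_neighborSet _ _).2 hxy.symm
            rw [hN0 h1k] at this
            exact absurd (Set.mem_singleton_iff.1 this).symm (hx' 1 (by omega))
          · have h1i : 1 ≤ i := by omega
            have hi1k : i + 1 < k := by omega
            have : x ∈ H.neighborSet (v i) := (H.mem_neighborSet _ _).2 hxy.symm
            rw [hNmid i h1i hi1k, Set.mem_insert_iff, Set.mem_singleton_iff] at this
            rcases this with h | h
            · exact absurd h.symm (hx' (i - 1) (by omega))
            · exact absurd h.symm (hx' (i + 1) (by omega))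
      · push_neg at hy
        rw [hφoff y (fun i hi he => hy i hi he)]
        have htri := hH.dist_triangle (u := w) (v := x) (w := y)
        rw [SimpleGraph.dist_eq_one_iff_adj.2 hxy] at htri
        omega
  -- φ is 1-Lipschitz along walks, hence along distances
  have hwalk : ∀ (x y : β) (W : H.Walk x y), φ y ≤ φ x + W.length := by
    intro x y W
    induction W with
    | nil => simp
    | @cons x z y a W ih =>
      have := hstep x z a
      simp only [Walk.length_cons]
      omega
  have hφdist : ∀ x y, φ y ≤ φ x + H.dist x y := by
    intro x y
    obtain ⟨W, hW⟩ := hH.exists_walk_length_eq_dist x y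
    have := hwalk x y W
    omega
  have hlow : ∀ x, φ x ≤ H.dist (v 0) x := by
    intro x
    have := hφdist (v 0) x
    rw [hφv 0 (by omega)] at this
    omega
  --距离 upper bounds along the path
  have hpathdist : ∀ t i, i + t < k → H.dist (v i) (v (i + t)) ≤ t := by
    intro t
    induction t with
    | zero => intro i _; simp [SimpleGraph.dist_self]
    | succ t ih =>
      intro i h
      have h1 := ih i (by omega)
      have h2 : H.dist (v (i + t)) (v (i + t + 1)) = 1 :=
        SimpleGraph.dist_eq_one_iff_adj.2 (hadj (i + t) (by omega))
      have htri := hH.dist_triangle (u := v i) (v := v (i + t)) (w := v (i + t + 1))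
      rw [h2] at htri
      rw [show i + (t + 1) = i + t + 1 by omega]
      omega
  have hviw : ∀ i, i < k → H.dist (v i) w ≤ k - i := by
    intro i hi
    have h1 := hpathdist (k - 1 - i) i (by omega)
    rw [show i + (k - 1 - i) = k - 1 by omega] at h1
    have h2 : H.dist (v (k - 1)) w = 1 := SimpleGraph.dist_eq_one_iff_adj.2 hw_adj
    have htri := hH.dist_triangle (u := v i) (v := v (k - 1)) (w := w)
    omega
  -- final case analysis
  by_cases hbp : ∃ i, i < k ∧ v i = b
  · obtain ⟨i, hi, rfl⟩ := hbp
    have hid : i ≤ d := by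
      have := hlow (v i); rw [hφv i hi] at this; omega
    by_cases hbp' : ∃ j, j < k ∧ v j = b'
    · obtain ⟨j, hj, rfl⟩ := hbp'
      have hjd : j ≤ d := by
        have := hlow (v j); rw [hφv j hj] at this; omega
      rcases le_total i j with hij | hij
      · have := hpathdist (j - i) i (by omega)
        rw [show i + (j - i) = j by omega] at this
        have : H.dist (v i) (v j) ≤ d := by omega
        exact le_trans this (le_max_left _ _)
      · have := hpathdist (i - j) j (by omega)
        rw [show j + (i - j) = i by omega] at this
        rw [SimpleGraph.dist_comm]
        have : H.dist (v j) (v i) ≤ d := by omega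
        exact le_trans this (le_max_left _ _)
    · push_neg at hbp'
      have hoff : φ b' = k + H.dist w b' := hφoff b' (fun i hi he => hbp' i hi he)
      have hlb := hlow b'
      rw [hoff] at hlb
      have h1 := hviw i hi
      have htri := hH.dist_triangle (u := v i) (v := w) (w := b')
      have : H.dist (v i) b' ≤ d := by omega
      exact le_trans this (le_max_left _ _)
  · push_neg at hbp
    have hoffb : φ b = k + H.dist w b := hφoff b (fun i hi he => hbp i hi he)
    have hlb := hlow b
    rw [hoffb] at hlb
    by_cases hbp' : ∃ j, j < k ∧ v j = b'
    · obtain ⟨j, hj, rfl⟩ := hbp'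
      have h1 := hviw j hj
      have htri := hH.dist_triangle (u := b) (v := w) (w := v j)
      have h2 : H.dist w b = H.dist b w := SimpleGraph.dist_comm
      have h3 : H.dist w (v j) = H.dist (v j) w := SimpleGraph.dist_comm
      have : H.dist b (v j) ≤ d := by omega
      exact le_trans this (le_max_left _ _)
    · push_neg at hbp'
      have hoffb' : φ b' = k + H.dist w b' := hφoff b' (fun i hi he => hbp' i hi he)
      have hlb' := hlow b'
      rw [hoffb'] at hlb'
      have htri := hH.dist_triangle (u := b) (v := w) (w := b')
      have h2 : H.dist w b = H.dist b w := SimpleGraph.dist_comm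
      have : H.dist b b' ≤ 2 * d - 2 * k := by omega
      exact le_trans this (le_max_right _ _)

theorem gamma_strongProd_eq_top_of_pendant {α β : Type*} [Fintype α] [Fintype β]
    (d p : ℕ) (hp : p < 2 * d) (G : SimpleGraph α) (H : SimpleGraph β)
    (hG : G.Connected) (hH : H.Connected)
    (hcard : (2 * d - p + 1) / 2 < Fintype.card β)
    (hGtop : distPackDomNum G d p = ⊤)
    (hpath : ∃ k : ℕ, 2 * d - p ≤ 2 * k ∧ HasPendantPath H k) :
    distPackDomNum (strongProd G H) d p = ⊤ := by
  classical
  rw [distPackDomNum, sInf_eq_top]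
  rintro n ⟨S, rfl, hdom, hpack⟩
  exfalso
  obtain ⟨k, hk2, v, hinj, hadj, h0, hmid⟩ := hpath
  have hdp : d < p := d_lt_p_of_top hG hGtop
  have hk1 : 1 ≤ k := by omega
  set T := (S.filter (fun x : α × β => H.dist (v 0) x.2 ≤ d)).image Prod.fst with hT
  have hdomT : IsDistDomSet G d T := by
    intro g
    obtain ⟨u, hu, hud⟩ := hdom (g, v 0)
    refine ⟨u.1, ?_, ?_⟩
    · refine Finset.mem_image_of_mem _ (Finset.mem_filter.2 ⟨hu, ?_⟩)
      have h2 := strongProd_dist_snd hG hH u (g, v 0)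
      rw [SimpleGraph.dist_comm]
      simp only at h2
      omega
    · have h1 := strongProd_dist_fst hG hH u (g, v 0)
      simp only at h1
      omega
  have hpackT : IsPacking G p T := by
    intro a ha a' ha' hne
    obtain ⟨x, hx, hx1⟩ := Finset.mem_image.1 ha
    obtain ⟨x', hx', hx1'⟩ := Finset.mem_image.1 ha'
    obtain ⟨hxS, hxd⟩ := Finset.mem_filter.1 hx
    obtain ⟨hxS', hxd'⟩ := Finset.mem_filter.1 hx'
    have hbb : H.dist x.2 x'.2 ≤ p := by
      have hmax := pendant_ball hH hk1 hinj hadj h0 hmid hxd hxd'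
      have h1 : d ≤ p := by omega
      have h2 : 2 * d - 2 * k ≤ p := by omega
      calc H.dist x.2 x'.2 ≤ max d (2 * d - 2 * k) := hmax
        _ ≤ p := max_le h1 h2
    have hxx' : x ≠ x' := by
      intro h
      apply hne
      rw [← hx1, ← hx1', h]
    have hge := hpack x hxS x' hxS' hxx'
    have hle := strongProd_dist_le hG hH x x'
    rw [← hx1, ← hx1']
    rcases max_cases (G.dist x.1 x'.1) (H.dist x.2 x'.2) with ⟨he, _⟩ | ⟨he, _⟩
    · omega
    · omega
  exact distPackDomNum_ne_top_witness hGtop T hdomT hpackT
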